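/- If (log n + ω(1))/n ≤ p ≤ (1.1 log n)/n, then asymptotically almost surely the random graph G ~ G(n,p) has at most n^{1/2} vertices of degree at most log n / 6. -/

import Mathlib

/-!
By Markov's inequality it suffices that the expected number of vertices of degree at most
`t = log n / 6` is `o(√n)`. A degree is `Binomial(n - 1, p)`, with generating function
`E[x ^ deg v] = (1 - p + p x) ^ (n - 1)`; taking `x = 1/6` gives
`P(deg v ≤ t) ≤ 6 ^ t (1 - 5p/6) ^ (n - 1)`. Since `log 6 < 2`, `6 ^ t ≤ n ^ (1/3)`, so the
Markov bound `√n · 6 ^ t · (1 - 5p/6) ^ (n - 1)` is at most `exp (5/6 - 5/6 (np - log n)) → 0`.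
-/

open scoped Classical
open Filter

/-- Number of edges of a finite simple graph. -/
noncomputable def edgeCount {V : Type*} [Fintype V] (G : SimpleGraph V) : ℕ :=
  G.edgeFinset.card

/-- `G` contains `k` pairwise edge-disjoint spanning trees. -/
def HasDisjSpanningTrees {V : Type*} (G : SimpleGraph V) (k : ℕ) : Prop :=
  ∃ f : Fin k → SimpleGraph V, (∀ i, f i ≤ G) ∧ (∀ i, (f i).IsTree) ∧
    ∀ i j, i ≠ j → Disjoint (f i).edgeSet (f j).edgeSet

/-- Spanning tree packing number: the maximum number of pairwise
edge-disjoint spanning trees of `G`. -/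
noncomputable def stp {V : Type*} (G : SimpleGraph V) : ℕ :=
  sSup {k | HasDisjSpanningTrees G k}

/-- Number of edges of `G` between `S` and its complement. -/
noncomputable def crossCount {V : Type*} [Fintype V] (G : SimpleGraph V) (S : Finset V) : ℕ :=
  ((S ×ˢ Sᶜ).filter fun e => G.Adj e.1 e.2).card

/-- Number of crossing edges of a partition `P` of the vertex set:
edges whose two endpoints lie in different parts of `P`. -/
noncomputable def partCross {V : Type*} [Fintype V] (G : SimpleGraph V)
    (P : Finpartition (Finset.univ : Finset V)) : ℕ :=
  (G.edgeFinset.filter fun e => ∀ t ∈ P.parts, ¬ ∀ v ∈ e, v ∈ t).card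

/-- Probability that the Erdős–Rényi random graph `G(n,p)` satisfies `Q`. -/
noncomputable def grProb (n : ℕ) (p : ℝ) (Q : SimpleGraph (Fin n) → Prop) : ℝ :=
  ∑ G : SimpleGraph (Fin n),
    if Q G then p ^ edgeCount G * (1 - p) ^ (n.choose 2 - edgeCount G) else 0

open Finset Real

namespace SimpleGraph

variable {V : Type*} [Fintype V] [DecidableEq V]

theorem sum_edgeFinset_eq_sum_powerset {M : Type*} [AddCommMonoid M]
    (F : Finset (Sym2 V) → M) :
    ∑ G : SimpleGraph V, F G.edgeFinset = ∑ s ∈ (⊤ : SimpleGraph V).edgeFinset.powerset, F s := by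
  refine sum_nbij' (fun G => G.edgeFinset) (fun s => fromEdgeSet s)
    (fun G _ => mem_powerset.2 (edgeFinset_mono le_top)) (fun _ _ => mem_univ _)
    (fun G _ => by simp) (fun s hs => ?_) (fun _ _ => rfl)
  have hs : (s : Set (Sym2 V)) ⊆ Sym2.diagSetᶜ := by
    simpa [← edgeSet_top] using mem_powerset.1 hs
  ext e
  simp only [mem_edgeFinset, edgeSet_fromEdgeSet, Set.mem_sdiff, mem_coe]
  exact ⟨And.left, fun he => ⟨he, hs he⟩⟩

theorem degree_eq_card_filter_mem (G : SimpleGraph V) [DecidableRel G.Adj] (v : V) :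
    G.degree v = #{e ∈ G.edgeFinset | v ∈ e} := by
  rw [← card_incidenceFinset_eq_degree, incidenceFinset_eq_filter]

end SimpleGraph

open SimpleGraph

noncomputable def grWeight (n : ℕ) (p : ℝ) (G : SimpleGraph (Fin n)) : ℝ :=
  p ^ edgeCount G * (1 - p) ^ (n.choose 2 - edgeCount G)

section
variable {n : ℕ} {p : ℝ}

theorem grProb_eq_sum (Q : SimpleGraph (Fin n) → Prop) :
    grProb n p Q = ∑ G, if Q G then grWeight n p G else 0 := rfl

theorem grWeight_nonneg (hp0 : 0 ≤ p) (hp1 : p ≤ 1) (G : SimpleGraph (Fin n)) :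
    0 ≤ grWeight n p G := by
  have : 0 ≤ 1 - p := by linarith
  unfold grWeight; positivity

theorem grWeight_eq_card_edgeFinset (G : SimpleGraph (Fin n)) :
    grWeight n p G =
      p ^ #G.edgeFinset * (1 - p) ^ (#(⊤ : SimpleGraph (Fin n)).edgeFinset - #G.edgeFinset) := by
  rw [card_edgeFinset_top_eq_card_choose_two, Fintype.card_fin]; rfl

theorem sum_grWeight : ∑ G, grWeight n p G = 1 := by
  simp_rw [grWeight_eq_card_edgeFinset]
  rw [sum_edgeFinset_eq_sum_powerset
      fun s => p ^ #s * (1 - p) ^ (#(⊤ : SimpleGraph (Fin n)).edgeFinset - #s),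
    sum_pow_mul_eq_add_pow, add_sub_cancel, one_pow]

theorem grProb_nonneg (hp0 : 0 ≤ p) (hp1 : p ≤ 1) (Q : SimpleGraph (Fin n) → Prop) :
    0 ≤ grProb n p Q :=
  sum_nonneg fun G _ => by split_ifs; exacts [grWeight_nonneg hp0 hp1 G, le_rfl]

theorem grProb_not (Q : SimpleGraph (Fin n) → Prop) :
    grProb n p (fun G => ¬ Q G) = 1 - grProb n p Q := by
  rw [eq_sub_iff_add_eq, grProb_eq_sum, grProb_eq_sum, ← sum_add_distrib, ← sum_grWeight (p := p)]
  exact sum_congr rfl fun G _ => by by_cases h : Q G <;> simp [h]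

theorem sum_grWeight_mul_pow_degree (x : ℝ) (v : Fin n) :
    ∑ G, grWeight n p G * x ^ G.degree v = (1 - p + p * x) ^ (n - 1) := by
  set K := (⊤ : SimpleGraph (Fin n)).edgeFinset
  have hK : #{e ∈ K | v ∈ e} = n - 1 := by
    rw [← degree_eq_card_filter_mem, complete_graph_degree, Fintype.card_fin]
  calc ∑ G, grWeight n p G * x ^ G.degree v
      = ∑ s ∈ K.powerset, (∏ e ∈ s, p * if v ∈ e then x else 1) * (1 - p) ^ (#K - #s) := by
        simp_rw [grWeight_eq_card_edgeFinset, degree_eq_card_filter_mem]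
        rw [sum_edgeFinset_eq_sum_powerset
          fun s => p ^ #s * (1 - p) ^ (#K - #s) * x ^ #{e ∈ s | v ∈ e}]
        refine sum_congr rfl fun s _ => ?_
        rw [prod_mul_distrib, prod_const, ← prod_filter, prod_const]; ring
    _ = ∏ e ∈ K, ((p * if v ∈ e then x else 1) + (1 - p)) := by
        rw [prod_add]
        refine sum_congr rfl fun s hs => ?_
        rw [prod_const, card_sdiff_of_subset (mem_powerset.1 hs)]
    _ = ∏ e ∈ K, if v ∈ e then 1 - p + p * x else 1 :=
        prod_congr rfl fun e _ => by split_ifs <;> ring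
    _ = (1 - p + p * x) ^ (n - 1) := by rw [← prod_filter, prod_const, hK]

-- Chernoff's trick: on the event `degree ≤ t`, the weight `a ^ (t - degree)` is at least `1`.
theorem grProb_degree_le_le {a : ℝ} (ha : 1 ≤ a) (hp0 : 0 ≤ p) (hp1 : p ≤ 1) (v : Fin n)
    (t : ℝ) :
    grProb n p (fun G => (G.degree v : ℝ) ≤ t) ≤ a ^ t * (1 - p + p * a⁻¹) ^ (n - 1) := by
  rw [← sum_grWeight_mul_pow_degree, mul_sum, grProb_eq_sum]
  refine sum_le_sum fun G _ => ?_
  have ha0 : 0 < a := by linarith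
  have hw := grWeight_nonneg hp0 hp1 G
  split_ifs with h
  · have hat : a ^ G.degree v ≤ a ^ t := by
      rw [← rpow_natCast]; exact rpow_le_rpow_of_exponent_le ha h
    calc grWeight n p G = grWeight n p G * a ^ G.degree v * a⁻¹ ^ G.degree v := by
          rw [mul_assoc, ← mul_pow, mul_inv_cancel₀ ha0.ne', one_pow, mul_one]
      _ ≤ grWeight n p G * a ^ t * a⁻¹ ^ G.degree v := by gcongr
      _ = a ^ t * (grWeight n p G * a⁻¹ ^ G.degree v) := by ring
  · positivity

theorem mul_grProb_lt_card_filter_le (hp0 : 0 ≤ p) (hp1 : p ≤ 1)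
    (P : SimpleGraph (Fin n) → Fin n → Prop) (c : ℝ) :
    c * grProb n p (fun G => c < #{v | P G v}) ≤ ∑ v, grProb n p (fun G => P G v) := by
  simp only [grProb_eq_sum, mul_sum]
  rw [sum_comm]
  refine sum_le_sum fun G _ => ?_
  rw [← sum_filter, sum_const, nsmul_eq_mul]
  have hw := grWeight_nonneg hp0 hp1 G
  split_ifs with h
  · exact mul_le_mul_of_nonneg_right h.le hw
  · rw [mul_zero]; positivity

end

theorem log_six_lt_two : log 6 < 2 := by
  rw [log_lt_iff_lt_exp (by norm_num)]
  have h := exp_one_gt_d9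
  have : exp 2 = exp 1 * exp 1 := by rw [← exp_add]; norm_num
  nlinarith

theorem sqrt_mul_six_rpow_mul_pow_le_exp {n : ℕ} (hn : 1 ≤ n) {p : ℝ} (hp1 : p ≤ 1) :
    √n * (6 ^ (log n / 6) * (1 - p + p * 6⁻¹) ^ (n - 1))
      ≤ exp (5 / 6 - 5 / 6 * (n * p - log n)) := by
  have hn0 : (0 : ℝ) < n := by exact_mod_cast hn
  have hbase : 1 - p + p * 6⁻¹ ≤ exp (-(5 / 6 * p)) := by
    linarith [add_one_le_exp (-(5 / 6 * p))]
  calc √n * (6 ^ (log n / 6) * (1 - p + p * 6⁻¹) ^ (n - 1))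
      ≤ exp (log n * (1 / 2)) * (exp (log 6 * (log n / 6)) * exp (-(5 / 6 * p)) ^ (n - 1)) := by
        rw [sqrt_eq_rpow, rpow_def_of_pos hn0, rpow_def_of_pos (by norm_num)]
        gcongr
        linarith
    _ = exp (log n / 2 + log 6 * (log n / 6) - 5 / 6 * p * (n - 1)) := by
        rw [← exp_nat_mul, ← exp_add, ← exp_add, Nat.cast_sub hn]
        ring_nf
    _ ≤ exp (5 / 6 - 5 / 6 * (n * p - log n)) := by
        refine exp_le_exp.2 ?_
        nlinarith [log_six_lt_two, log_natCast_nonneg n]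

theorem grProb_sqrt_lt_card_degree_le_le_exp {n : ℕ} (hn : 1 ≤ n) {p : ℝ} (hp0 : 0 ≤ p)
    (hp1 : p ≤ 1) :
    grProb n p (fun G => √n < #{v | (G.degree v : ℝ) ≤ log n / 6})
      ≤ exp (5 / 6 - 5 / 6 * (n * p - log n)) := by
  set B := 6 ^ (log n / 6) * (1 - p + p * 6⁻¹) ^ (n - 1)
  have hmarkov := mul_grProb_lt_card_filter_le (n := n) hp0 hp1
    (fun G v => (G.degree v : ℝ) ≤ log n / 6) √n
  have htail :
      ∑ v : Fin n, grProb n p (fun G => (G.degree v : ℝ) ≤ log n / 6) ≤ √n * (√n * B) :=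
    calc _ ≤ ∑ _v : Fin n, B :=
          sum_le_sum fun v _ => grProb_degree_le_le (by norm_num) hp0 hp1 v _
      _ = √n * (√n * B) := by
        rw [sum_const, card_univ, Fintype.card_fin, nsmul_eq_mul, ← mul_assoc √_,
          mul_self_sqrt (Nat.cast_nonneg n)]
  exact (le_of_mul_le_mul_left (hmarkov.trans htail) (by positivity)).trans
    (sqrt_mul_six_rpow_mul_pow_le_exp hn hp1)

theorem aas_few_small_vertices_general (p : ℕ → ℝ) (hp0 : ∀ n, 0 ≤ p n) (hp1 : ∀ n, p n ≤ 1)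
    (hlow : Filter.Tendsto (fun n : ℕ => (n : ℝ) * p n - Real.log n) Filter.atTop Filter.atTop) :
    Filter.Tendsto
      (fun n : ℕ => grProb n (p n) fun G =>
        (((Finset.univ.filter fun v => (G.degree v : ℝ) ≤ Real.log n / 6).card : ℝ))
          ≤ Real.sqrt n)
      Filter.atTop (nhds 1) := by
  have hbad : ∀ᶠ n : ℕ in atTop,
      grProb n (p n) (fun G => ¬ (#{v | (G.degree v : ℝ) ≤ log n / 6} : ℝ) ≤ √n)
        ≤ exp (5 / 6 - 5 / 6 * (n * p n - log n)) := by
    filter_upwards [eventually_ge_atTop 1] with n hn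
    simpa only [not_le] using grProb_sqrt_lt_card_degree_le_le_exp hn (hp0 n) (hp1 n)
  have hexp : Tendsto (fun n : ℕ => exp (5 / 6 - 5 / 6 * (n * p n - log n))) atTop (nhds 0) := by
    refine tendsto_exp_atBot.comp ?_
    simpa only [sub_eq_add_neg, Function.comp_def] using tendsto_atBot_add_const_left _ (5 / 6)
      (tendsto_neg_atTop_atBot.comp (hlow.const_mul_atTop (by norm_num : (0 : ℝ) < 5 / 6)))
  have hlim := (tendsto_const_nhds (x := (1 : ℝ))).sub
    (squeeze_zero' (.of_forall fun n => grProb_nonneg (hp0 n) (hp1 n) _) hbad hexp)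
  simpa only [grProb_not, sub_sub_cancel, sub_zero] using hlim

theorem aas_few_small_vertices (p : ℕ → ℝ) (hp0 : ∀ n, 0 ≤ p n) (hp1 : ∀ n, p n ≤ 1)
    (hlow : Filter.Tendsto (fun n : ℕ => (n : ℝ) * p n - Real.log n) Filter.atTop Filter.atTop)
    (hhigh : ∀ᶠ n : ℕ in Filter.atTop, p n ≤ 1.1 * Real.log n / n) :
    Filter.Tendsto
      (fun n : ℕ => grProb n (p n) fun G =>
        (((Finset.univ.filter fun v => (G.degree v : ℝ) ≤ Real.log n / 6).card : ℝ))
          ≤ Real.sqrt n)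
      Filter.atTop (nhds 1) :=
  aas_few_small_vertices_general p hp0 hp1 hlow
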